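/- Let k ≥ 1. For all (z,t), (z',t') ∈ ℂ^k × ℝ, the Korányi gauge is subadditive with respect to the Heisenberg group law: ρ((z,t)·(z',t')) ≤ ρ(z,t) + ρ(z',t'). -/

import Mathlib

noncomputable section

/-- The underlying space of the Heisenberg group ℍ_k : ℂ^k × ℝ. -/
abbrev Hk (k : ℕ) := (Fin k → ℂ) × ℝ

/-- The Korányi gauge ρ(z,t) = (|z|⁴ + t²)^{1/4}, where |z|² = Σⱼ |zⱼ|². -/
def rhoK (k : ℕ) (v : Hk k) : ℝ :=
  ((∑ j, ‖v.1 j‖ ^ 2) ^ 2 + v.2 ^ 2) ^ ((1 : ℝ) / 4)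

/-- The Heisenberg dilations δ_r(z,t) = (r z, r² t). -/
def dilK (k : ℕ) (r : ℝ) (v : Hk k) : Hk k := (r • v.1, r ^ 2 * v.2)

/-- The Korányi unit sphere S_ρ = {v : ρ(v) = 1}. -/
def SK (k : ℕ) : Set (Hk k) := {v | rhoK k v = 1}

/-- The Heisenberg group law (z,t)·(z',t') = (z+z', t+t'+2 Im⟨z,z'⟩). -/
def hmul (k : ℕ) (p q : Hk k) : Hk k :=
  (p.1 + q.1, p.2 + q.2 + 2 * (∑ j, p.1 j * (starRingEnd ℂ) (q.1 j)).im)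

/-- The Heisenberg group inverse (z,t)⁻¹ = (−z,−t). -/
def hinv (k : ℕ) (p : Hk k) : Hk k := (-p.1, -p.2)

/-- The left-invariant Korányi distance d(p,q) = ρ(p⁻¹·q). -/
def dK (k : ℕ) (p q : Hk k) : ℝ := rhoK k (hmul k (hinv k p) q)

/-!
Encode `v = (z, t)` as the complex number `|z|² + i t`. Its modulus is `ρ(v)²`, and since
`|z + z'|² = |z|² + |z'|² + 2 Re⟨z, z'⟩`, the number attached to `p · q` is the sum of those of
`p` and `q` plus `2⟨z, z'⟩`. The triangle inequality in `ℂ` and Cauchy–Schwarz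
`|⟨z, z'⟩| ≤ |z| |z'| ≤ ρ(p) ρ(q)` then give `ρ(p · q)² ≤ (ρ(p) + ρ(q))²`.
-/

open Complex ComplexConjugate

def koranyiComplex (k : ℕ) (v : Hk k) : ℂ := ⟨∑ j, ‖v.1 j‖ ^ 2, v.2⟩

lemma rhoK_nonneg (k : ℕ) (v : Hk k) : 0 ≤ rhoK k v := by
  unfold rhoK; positivity

lemma rhoK_sq (k : ℕ) (v : Hk k) : rhoK k v ^ 2 = ‖koranyiComplex k v‖ := by
  have hx : (0 : ℝ) ≤ (∑ j, ‖v.1 j‖ ^ 2) ^ 2 + v.2 ^ 2 := by positivity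
  rw [rhoK, norm_eq_sqrt_sq_add_sq, ← Real.rpow_natCast, ← Real.rpow_mul hx,
    Real.sqrt_eq_rpow]
  norm_num [koranyiComplex]

lemma sum_norm_sq_le_rhoK_sq (k : ℕ) (v : Hk k) : ∑ j, ‖v.1 j‖ ^ 2 ≤ rhoK k v ^ 2 := by
  rw [rhoK_sq]
  exact (le_abs_self _).trans (abs_re_le_norm (koranyiComplex k v))

lemma koranyiComplex_hmul (k : ℕ) (p q : Hk k) :
    koranyiComplex k (hmul k p q) =
      koranyiComplex k p + koranyiComplex k q + 2 * ∑ j, p.1 j * conj (q.1 j) := by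
  apply Complex.ext
  · simp only [koranyiComplex, hmul, Pi.add_apply, Complex.sq_norm, normSq_add, add_re, re_sum,
      Finset.sum_add_distrib, Finset.mul_sum]
    simp
  · simp [koranyiComplex, hmul]

lemma norm_sum_mul_conj_le {ι : Type*} [Fintype ι] (z w : ι → ℂ) :
    ‖∑ j, z j * conj (w j)‖ ≤ √(∑ j, ‖z j‖ ^ 2) * √(∑ j, ‖w j‖ ^ 2) :=
  calc ‖∑ j, z j * conj (w j)‖ ≤ ∑ j, ‖z j‖ * ‖w j‖ := by
        simpa only [norm_mul, RCLike.norm_conj] using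
          norm_sum_le Finset.univ fun j => z j * conj (w j)
    _ ≤ _ := Real.sum_mul_le_sqrt_mul_sqrt _ _ _

lemma norm_sum_mul_conj_le_rhoK_mul (k : ℕ) (p q : Hk k) :
    ‖∑ j, p.1 j * conj (q.1 j)‖ ≤ rhoK k p * rhoK k q := by
  have hsqrt_le (v : Hk k) : √(∑ j, ‖v.1 j‖ ^ 2) ≤ rhoK k v :=
    Real.sqrt_le_iff.2 ⟨rhoK_nonneg k v, sum_norm_sq_le_rhoK_sq k v⟩
  exact (norm_sum_mul_conj_le p.1 q.1).trans
    (mul_le_mul (hsqrt_le p) (hsqrt_le q) (Real.sqrt_nonneg _) (rhoK_nonneg k p))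

theorem stmt12_general (k : ℕ) (p q : Hk k) :
    rhoK k (hmul k p q) ≤ rhoK k p + rhoK k q := by
  have hsq : rhoK k (hmul k p q) ^ 2 ≤ (rhoK k p + rhoK k q) ^ 2 :=
    calc rhoK k (hmul k p q) ^ 2
        = ‖koranyiComplex k p + koranyiComplex k q + 2 * ∑ j, p.1 j * conj (q.1 j)‖ := by
          rw [rhoK_sq, koranyiComplex_hmul]
      _ ≤ ‖koranyiComplex k p‖ + ‖koranyiComplex k q‖ + 2 * ‖∑ j, p.1 j * conj (q.1 j)‖ := by
          refine (norm_add₃_le).trans_eq ?_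
          rw [norm_mul, RCLike.norm_ofNat]
      _ ≤ rhoK k p ^ 2 + rhoK k q ^ 2 + 2 * (rhoK k p * rhoK k q) := by
          rw [rhoK_sq, rhoK_sq]
          gcongr
          exact norm_sum_mul_conj_le_rhoK_mul k p q
      _ = (rhoK k p + rhoK k q) ^ 2 := by ring
  exact (pow_le_pow_iff_left₀ (rhoK_nonneg k _)
    (add_nonneg (rhoK_nonneg k p) (rhoK_nonneg k q)) two_ne_zero).1 hsq

/-- the Korányi gauge is subadditive with respect to the Heisenberg
group law: `ρ((z,t)·(z',t')) ≤ ρ(z,t) + ρ(z',t')`. -/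
theorem stmt12 (k : ℕ) (hk : 1 ≤ k) (p q : Hk k) :
    rhoK k (hmul k p q) ≤ rhoK k p + rhoK k q :=
  stmt12_general k p q

end
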